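/- Surjectivity half of the main theorem: Let F : G → H be a weak equivalence of cosimplicial crossed groupoids. Then for every descent datum (y, h, b) in H there exists a descent datum (x, g, a) in G and a gauge transformation (y, h, b) → F(x, g, a) in H. Hence the induced map on gauge equivalence classes, Desc-bar(F) : Desc-bar(G) → Desc-bar(H), is surjective. -/

import Mathlib

/-!
Pick `x` with `F x ≅ y` (π₀-surjectivity in degree 0) and move `(y, h, b)` along this
isomorphism by a gauge transformation. Since `F¹` is π₀-injective and π₁-surjective, the
transported 1-morphism is `F g ∘ D d` for some `g` in `G¹`, and the 2-morphism part of the gauge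
transformation can absorb `D d`, so that the new 1-morphism is exactly `F g`. Gauge
transformations preserve descent data, so `(F x, F g, b')` is again one. By π₁-injectivity in
degree 2 the failure of `g` to be a 1-cocycle is `D a₀`, and by π₂-surjectivity `a₀` can be
corrected by an element of `Ker D` so that `F a = b'`. Finally the two sides of the twisted
2-cocycle condition for `a` have the same image under `D` (both are determined by `g`) and under
`F` (since `b'` satisfies the condition), so they agree by π₂-injectivity in degree 3.
-/

/-! Crossed groupoids (= crossed modules over groupoids), following Yekutieli,
"Combinatorial descent data for gerbes". -/

structure CrossedGroupoid : Type 1 where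
  Obj : Type
  Hom : Obj → Obj → Type
  id : ∀ x, Hom x x
  comp : ∀ {x y z}, Hom y z → Hom x y → Hom x z
  inv : ∀ {x y}, Hom x y → Hom y x
  comp_assoc : ∀ {x y z w} (h : Hom z w) (g : Hom y z) (f : Hom x y),
    comp (comp h g) f = comp h (comp g f)
  id_comp : ∀ {x y} (f : Hom x y), comp (id y) f = f
  comp_id : ∀ {x y} (f : Hom x y), comp f (id x) = f
  inv_comp : ∀ {x y} (f : Hom x y), comp (inv f) f = id x
  comp_inv : ∀ {x y} (f : Hom x y), comp f (inv f) = id y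
  -- the totally disconnected groupoid 𝒢₂, i.e. a family of groups
  G2 : Obj → Type
  mul : ∀ {x}, G2 x → G2 x → G2 x
  one : ∀ x, G2 x
  inv2 : ∀ {x}, G2 x → G2 x
  mul_assoc : ∀ {x} (a b c : G2 x), mul (mul a b) c = mul a (mul b c)
  one_mul : ∀ {x} (a : G2 x), mul (one x) a = a
  mul_one : ∀ {x} (a : G2 x), mul a (one x) = a
  inv2_mul : ∀ {x} (a : G2 x), mul (inv2 a) a = one x
  -- the twisting: an action of 𝒢₁ on 𝒢₂
  Ad : ∀ {x y}, Hom x y → G2 x → G2 y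
  Ad_mul : ∀ {x y} (g : Hom x y) (a b : G2 x), Ad g (mul a b) = mul (Ad g a) (Ad g b)
  Ad_one : ∀ {x y} (g : Hom x y), Ad g (one x) = one y
  Ad_id : ∀ {x} (a : G2 x), Ad (id x) a = a
  Ad_comp : ∀ {x y z} (h : Hom y z) (g : Hom x y) (a : G2 x),
    Ad (comp h g) a = Ad h (Ad g a)
  -- the feedback D : 𝒢₂ → 𝒢₁, identity on objects
  D : ∀ {x}, G2 x → Hom x x
  D_mul : ∀ {x} (a b : G2 x), D (mul a b) = comp (D a) (D b)
  D_one : ∀ x, D (one x) = id x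
  -- equivariance of the feedback
  D_Ad : ∀ {x y} (g : Hom x y) (a : G2 x), D (Ad g a) = comp (comp g (D a)) (inv g)
  -- Peiffer condition
  peiffer : ∀ {x} (a b : G2 x), Ad (D a) b = mul (mul a b) (inv2 a)

namespace CrossedGroupoid

/-- Transport of 1-morphisms along equalities of objects. -/
def hcast (G : CrossedGroupoid) {x x' y y' : G.Obj} (ex : x = x') (ey : y = y')
    (f : G.Hom x y) : G.Hom x' y' := ey ▸ ex ▸ f

/-- Transport of 2-morphisms along an equality of objects. -/
def cast2 (G : CrossedGroupoid) {x x' : G.Obj} (e : x = x') (a : G.G2 x) : G.G2 x' := e ▸ a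

/-- The relation "isomorphic in 𝒢₁". -/
def pi0Rel (G : CrossedGroupoid) : G.Obj → G.Obj → Prop := fun x y => Nonempty (G.Hom x y)

/-- π₀ of a crossed groupoid: isomorphism classes of objects of 𝒢₁. -/
def pi0 (G : CrossedGroupoid) : Type := Quot G.pi0Rel

/-- The right action relation on a hom-set: g' = g ∘ D(a). -/
def homRel (G : CrossedGroupoid) (x x' : G.Obj) : G.Hom x x' → G.Hom x x' → Prop :=
  fun g g' => ∃ a : G.G2 x, g' = G.comp g (G.D a)

/-- π₁(G, x, x') := 𝒢₁(x,x') / 𝒢₂(x). -/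
def pi1' (G : CrossedGroupoid) (x x' : G.Obj) : Type := Quot (G.homRel x x')

/-- π₁(G, x) = Coker(D : 𝒢₂(x) → 𝒢₁(x)) as a quotient set. -/
def pi1 (G : CrossedGroupoid) (x : G.Obj) : Type := G.pi1' x x

/-- π₂(G, x) = Ker(D : 𝒢₂(x) → 𝒢₁(x)). -/
def pi2 (G : CrossedGroupoid) (x : G.Obj) : Type := {a : G.G2 x // G.D a = G.id x}

end CrossedGroupoid

/-- A morphism of crossed groupoids. -/
structure CrossedGroupoidHom (G H : CrossedGroupoid) where
  obj : G.Obj → H.Obj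
  map1 : ∀ {x y : G.Obj}, G.Hom x y → H.Hom (obj x) (obj y)
  map2 : ∀ {x : G.Obj}, G.G2 x → H.G2 (obj x)
  map1_comp : ∀ {x y z : G.Obj} (g : G.Hom y z) (f : G.Hom x y),
    map1 (G.comp g f) = H.comp (map1 g) (map1 f)
  map1_id : ∀ x : G.Obj, map1 (G.id x) = H.id (obj x)
  map2_mul : ∀ {x : G.Obj} (a b : G.G2 x), map2 (G.mul a b) = H.mul (map2 a) (map2 b)
  map_D : ∀ {x : G.Obj} (a : G.G2 x), map1 (G.D a) = H.D (map2 a)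
  map_Ad : ∀ {x y : G.Obj} (g : G.Hom x y) (a : G.G2 x),
    map2 (G.Ad g a) = H.Ad (map1 g) (map2 a)

namespace CrossedGroupoidHom

/-- Identity morphism of crossed groupoids. -/
def id (G : CrossedGroupoid) : CrossedGroupoidHom G G where
  obj := fun x => x
  map1 := fun f => f
  map2 := fun a => a
  map1_comp := fun _ _ => rfl
  map1_id := fun _ => rfl
  map2_mul := fun _ _ => rfl
  map_D := fun _ => rfl
  map_Ad := fun _ _ => rfl

/-- Composition of morphisms of crossed groupoids. -/
def comp {G H K : CrossedGroupoid} (F₂ : CrossedGroupoidHom H K) (F₁ : CrossedGroupoidHom G H) :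
    CrossedGroupoidHom G K where
  obj := fun x => F₂.obj (F₁.obj x)
  map1 := fun f => F₂.map1 (F₁.map1 f)
  map2 := fun a => F₂.map2 (F₁.map2 a)
  map1_comp := fun g f => by (try dsimp only); rw [F₁.map1_comp, F₂.map1_comp]
  map1_id := fun x => by (try dsimp only); rw [F₁.map1_id, F₂.map1_id]
  map2_mul := fun a b => by (try dsimp only); rw [F₁.map2_mul, F₂.map2_mul]
  map_D := fun a => by (try dsimp only); rw [F₁.map_D, F₂.map_D]
  map_Ad := fun g a => by (try dsimp only); rw [F₁.map_Ad, F₂.map_Ad]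

variable {G H : CrossedGroupoid}

/-- The induced map on π₀. -/
def pi0map (F : CrossedGroupoidHom G H) : G.pi0 → H.pi0 :=
  Quot.map F.obj (fun _ _ h => ⟨F.map1 h.some⟩)

/-- The induced map on π₁(−, x, x'). -/
def pi1'map (F : CrossedGroupoidHom G H) (x x' : G.Obj) :
    G.pi1' x x' → H.pi1' (F.obj x) (F.obj x') :=
  Quot.map F.map1 (by
    rintro g g' ⟨a, rfl⟩
    exact ⟨F.map2 a, by rw [F.map1_comp, F.map_D]⟩)

/-- The induced map on π₁(−, x). -/
def pi1map (F : CrossedGroupoidHom G H) (x : G.Obj) : G.pi1 x → H.pi1 (F.obj x) :=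
  F.pi1'map x x

/-- The induced map on π₂(−, x). -/
def pi2map (F : CrossedGroupoidHom G H) (x : G.Obj) : G.pi2 x → H.pi2 (F.obj x) :=
  fun a => ⟨F.map2 a.1, by rw [← F.map_D, a.2, F.map1_id]⟩

/-- A weak equivalence of crossed groupoids: bijective on π₀, π₁ and π₂. -/
def IsWeakEquiv (F : CrossedGroupoidHom G H) : Prop :=
  Function.Bijective F.pi0map ∧ (∀ x, Function.Bijective (F.pi1map x)) ∧
    (∀ x, Function.Bijective (F.pi2map x))

end CrossedGroupoidHom

/-! ### Combinatorics of the simplex category -/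

/-- The vertex (i) of Δ^q, as a monotone map Δ⁰ → Δ^q. -/
def vtxMap {q : ℕ} (i : Fin (q + 1)) : Fin 1 →o Fin (q + 1) :=
  ⟨fun _ => i, fun _ _ _ => le_rfl⟩

/-- The edge (i,j) of Δ^q, as a monotone map Δ¹ → Δ^q. -/
def edgeMap {q : ℕ} (i j : Fin (q + 1)) (h : i ≤ j) : Fin 2 →o Fin (q + 1) :=
  ⟨fun k => if (k : ℕ) = 0 then i else j, by
    intro a b hab
    have hab' : (a : ℕ) ≤ (b : ℕ) := hab
    show (if (a : ℕ) = 0 then i else j) ≤ (if (b : ℕ) = 0 then i else j)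
    by_cases ha : (a : ℕ) = 0
    · by_cases hb : (b : ℕ) = 0
      · rw [if_pos ha, if_pos hb]
      · rw [if_pos ha, if_neg hb]; exact h
    · have hb : ¬ (b : ℕ) = 0 := fun hb0 => ha (Nat.le_zero.mp (hb0 ▸ hab'))
      rw [if_neg ha, if_neg hb]⟩

/-- The triangle (i,j,k) of Δ^q, as a monotone map Δ² → Δ^q. -/
def triMap {q : ℕ} (i j k : Fin (q + 1)) (hij : i ≤ j) (hjk : j ≤ k) :
    Fin 3 →o Fin (q + 1) :=
  ⟨fun m => if (m : ℕ) = 0 then i else if (m : ℕ) = 1 then j else k, by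
    intro a b hab
    have hab' : (a : ℕ) ≤ (b : ℕ) := hab
    show (if (a : ℕ) = 0 then i else if (a : ℕ) = 1 then j else k) ≤
      (if (b : ℕ) = 0 then i else if (b : ℕ) = 1 then j else k)
    by_cases ha0 : (a : ℕ) = 0
    · by_cases hb0 : (b : ℕ) = 0
      · rw [if_pos ha0, if_pos hb0]
      · by_cases hb1 : (b : ℕ) = 1
        · rw [if_pos ha0, if_neg hb0, if_pos hb1]; exact hij
        · rw [if_pos ha0, if_neg hb0, if_neg hb1]; exact hij.trans hjk
    · by_cases ha1 : (a : ℕ) = 1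
      · have hb0 : ¬ (b : ℕ) = 0 := by omega
        by_cases hb1 : (b : ℕ) = 1
        · rw [if_neg ha0, if_pos ha1, if_neg hb0, if_pos hb1]
        · rw [if_neg ha0, if_pos ha1, if_neg hb0, if_neg hb1]; exact hjk
      · have hb0 : ¬ (b : ℕ) = 0 := by omega
        have hb1 : ¬ (b : ℕ) = 1 := by omega
        rw [if_neg ha0, if_neg ha1, if_neg hb0, if_neg hb1]⟩

theorem comp_vtxMap {p q : ℕ} (α : Fin (p + 1) →o Fin (q + 1)) (i : Fin (p + 1)) :
    α.comp (vtxMap i) = vtxMap (α i) := rfl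

/-! ### Cosimplicial crossed groupoids -/

/-- A cosimplicial crossed groupoid: a functor Δ → CrGrpd. -/
structure CosimplicialCrossedGroupoid : Type 1 where
  obj : ℕ → CrossedGroupoid
  map : ∀ {p q : ℕ}, (Fin (p + 1) →o Fin (q + 1)) → CrossedGroupoidHom (obj p) (obj q)
  map_id : ∀ p, map (OrderHom.id : Fin (p + 1) →o Fin (p + 1)) = CrossedGroupoidHom.id (obj p)
  map_comp : ∀ {p q r : ℕ} (β : Fin (q + 1) →o Fin (r + 1)) (α : Fin (p + 1) →o Fin (q + 1)),
    map (β.comp α) = (map β).comp (map α)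

namespace CosimplicialCrossedGroupoid

variable (G : CosimplicialCrossedGroupoid)

theorem obj_comp {p q r : ℕ} (β : Fin (q + 1) →o Fin (r + 1)) (α : Fin (p + 1) →o Fin (q + 1))
    (x : (G.obj p).Obj) :
    (G.map β).obj ((G.map α).obj x) = (G.map (β.comp α)).obj x := by
  rw [G.map_comp]; rfl

/-- The object x of G⁰ pushed to the vertex (i) of Δ^q. -/
def X (x : (G.obj 0).Obj) (q : ℕ) (i : Fin (q + 1)) : (G.obj q).Obj :=
  (G.map (vtxMap i)).obj x

theorem X_push (x : (G.obj 0).Obj) {p q : ℕ} (α : Fin (p + 1) →o Fin (q + 1))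
    (i : Fin (p + 1)) : (G.map α).obj (G.X x p i) = G.X x q (α i) := by
  unfold X
  rw [obj_comp, comp_vtxMap]

/-- Pushing a 1-morphism between vertex objects along α. -/
def push1 {x : (G.obj 0).Obj} {p q : ℕ} (α : Fin (p + 1) →o Fin (q + 1))
    {i j : Fin (p + 1)} (g : (G.obj p).Hom (G.X x p i) (G.X x p j)) :
    (G.obj q).Hom (G.X x q (α i)) (G.X x q (α j)) :=
  (G.obj q).hcast (G.X_push x α i) (G.X_push x α j) ((G.map α).map1 g)

/-- Pushing a 2-morphism at a vertex object along α. -/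
def push2 {x : (G.obj 0).Obj} {p q : ℕ} (α : Fin (p + 1) →o Fin (q + 1))
    {i : Fin (p + 1)} (a : (G.obj p).G2 (G.X x p i)) :
    (G.obj q).G2 (G.X x q (α i)) :=
  (G.obj q).cast2 (G.X_push x α i) ((G.map α).map2 a)

/-- Yekutieli's combinatorial descent conditions (Definition 1.5):
the failure-of-1-cocycle condition and the twisted 2-cocycle condition. -/
def IsDescent (x : (G.obj 0).Obj)
    (g : (G.obj 1).Hom (G.X x 1 0) (G.X x 1 1))
    (a : (G.obj 2).G2 (G.X x 2 0)) : Prop :=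
  ((G.obj 2).comp ((G.obj 2).comp ((G.obj 2).inv (G.push1 (edgeMap 0 2 (by decide)) g))
      (G.push1 (edgeMap 1 2 (by decide)) g)) (G.push1 (edgeMap 0 1 (by decide)) g)
    = (G.obj 2).D a)
  ∧
  ((G.obj 3).mul ((G.obj 3).mul
        ((G.obj 3).inv2 (G.push2 (triMap 0 1 3 (by decide) (by decide)) a))
        (G.push2 (triMap 0 2 3 (by decide) (by decide)) a))
      (G.push2 (triMap 0 1 2 (by decide) (by decide)) a)
    = (G.obj 3).Ad ((G.obj 3).inv (G.push1 (edgeMap 0 1 (by decide)) g))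
        (G.push2 (triMap 1 2 3 (by decide) (by decide)) a))

/-- A combinatorial descent datum (Definition 1.5). -/
structure Desc (G : CosimplicialCrossedGroupoid) where
  x : (G.obj 0).Obj
  g : (G.obj 1).Hom (G.X x 1 0) (G.X x 1 1)
  a : (G.obj 2).G2 (G.X x 2 0)
  isDescent : G.IsDescent x g a

/-- The Yekutieli gauge-transformation conditions (Definition 1.7) for a pair (f, c). -/
def IsGauge (x : (G.obj 0).Obj) (g : (G.obj 1).Hom (G.X x 1 0) (G.X x 1 1))
    (a : (G.obj 2).G2 (G.X x 2 0))
    (x' : (G.obj 0).Obj) (g' : (G.obj 1).Hom (G.X x' 1 0) (G.X x' 1 1))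
    (a' : (G.obj 2).G2 (G.X x' 2 0))
    (f : (G.obj 0).Hom x x') (c : (G.obj 1).G2 (G.X x 1 0)) : Prop :=
  (g' = (G.obj 1).comp ((G.obj 1).comp ((G.obj 1).comp
      ((G.map (vtxMap (1 : Fin 2))).map1 f) g) ((G.obj 1).D c))
      ((G.obj 1).inv ((G.map (vtxMap (0 : Fin 2))).map1 f)))
  ∧
  (a' = (G.obj 2).Ad ((G.map (vtxMap (0 : Fin 3))).map1 f)
    ((G.obj 2).mul ((G.obj 2).mul ((G.obj 2).mul
        ((G.obj 2).inv2 (G.push2 (edgeMap 0 2 (by decide)) c)) a)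
        ((G.obj 2).Ad ((G.obj 2).inv (G.push1 (edgeMap 0 1 (by decide)) g))
          (G.push2 (edgeMap 1 2 (by decide)) c)))
      (G.push2 (edgeMap 0 1 (by decide)) c)))

/-- Gauge equivalence of descent data. -/
def GaugeEquiv (P Q : G.Desc) : Prop :=
  ∃ (f : (G.obj 0).Hom P.x Q.x) (c : (G.obj 1).G2 (G.X P.x 1 0)),
    G.IsGauge P.x P.g P.a Q.x Q.g Q.a f c

/-- The explicit formula for the transported 2-morphism a'
(Definition 1.7(ii) / Lemma 1.9). -/
def transportA {x x' : (G.obj 0).Obj} (f : (G.obj 0).Hom x x')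
    (g : (G.obj 1).Hom (G.X x 1 0) (G.X x 1 1))
    (a : (G.obj 2).G2 (G.X x 2 0)) (c : (G.obj 1).G2 (G.X x 1 0)) :
    (G.obj 2).G2 (G.X x' 2 0) :=
  (G.obj 2).Ad ((G.map (vtxMap (0 : Fin 3))).map1 f)
    ((G.obj 2).mul ((G.obj 2).mul ((G.obj 2).mul
        ((G.obj 2).inv2 (G.push2 (edgeMap 0 2 (by decide)) c)) a)
        ((G.obj 2).Ad ((G.obj 2).inv (G.push1 (edgeMap 0 1 (by decide)) g))
          (G.push2 (edgeMap 1 2 (by decide)) c)))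
      (G.push2 (edgeMap 0 1 (by decide)) c))

end CosimplicialCrossedGroupoid

/-- A morphism of cosimplicial crossed groupoids. -/
structure CosimplicialMor (G H : CosimplicialCrossedGroupoid) where
  app : ∀ p, CrossedGroupoidHom (G.obj p) (H.obj p)
  naturality : ∀ {p q : ℕ} (α : Fin (p + 1) →o Fin (q + 1)),
    (app q).comp (G.map α) = (H.map α).comp (app p)

namespace CosimplicialMor

variable {G H : CosimplicialCrossedGroupoid}

theorem app_X (F : CosimplicialMor G H) (x : (G.obj 0).Obj) (q : ℕ) (i : Fin (q + 1)) :
    (F.app q).obj (G.X x q i) = H.X ((F.app 0).obj x) q i :=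
  congrFun (congrArg CrossedGroupoidHom.obj (F.naturality (vtxMap i))) x

/-- Image of an object of G⁰. -/
def objD (F : CosimplicialMor G H) (x : (G.obj 0).Obj) : (H.obj 0).Obj := (F.app 0).obj x

/-- Image of a 1-morphism in dimension 0. -/
def mapF (F : CosimplicialMor G H) {x x' : (G.obj 0).Obj} (f : (G.obj 0).Hom x x') :
    (H.obj 0).Hom (F.objD x) (F.objD x') := (F.app 0).map1 f

/-- Image of the 1-morphism part of a descent datum. -/
def mapG (F : CosimplicialMor G H) {x : (G.obj 0).Obj}
    (g : (G.obj 1).Hom (G.X x 1 0) (G.X x 1 1)) :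
    (H.obj 1).Hom (H.X (F.objD x) 1 0) (H.X (F.objD x) 1 1) :=
  (H.obj 1).hcast (F.app_X x 1 0) (F.app_X x 1 1) ((F.app 1).map1 g)

/-- Image of the 2-morphism part of a descent datum. -/
def mapA (F : CosimplicialMor G H) {x : (G.obj 0).Obj} (a : (G.obj 2).G2 (G.X x 2 0)) :
    (H.obj 2).G2 (H.X (F.objD x) 2 0) :=
  (H.obj 2).cast2 (F.app_X x 2 0) ((F.app 2).map2 a)

/-- Image of the 2-morphism part of a gauge transformation. -/
def mapC (F : CosimplicialMor G H) {x : (G.obj 0).Obj} (c : (G.obj 1).G2 (G.X x 1 0)) :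
    (H.obj 1).G2 (H.X (F.objD x) 1 0) :=
  (H.obj 1).cast2 (F.app_X x 1 0) ((F.app 1).map2 c)

/-- A weak equivalence of cosimplicial crossed groupoids. -/
def IsWeakEquiv (F : CosimplicialMor G H) : Prop := ∀ p, (F.app p).IsWeakEquiv

end CosimplicialMor

namespace CrossedGroupoid

instance instGroupG2 (K : CrossedGroupoid) (x : K.Obj) : Group (K.G2 x) where
  mul := K.mul
  one := K.one x
  inv := K.inv2
  mul_assoc := K.mul_assoc
  one_mul := K.one_mul
  mul_one := K.mul_one
  inv_mul_cancel := K.inv2_mul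

variable {K : CrossedGroupoid}

theorem D_mul' {x : K.Obj} (a b : K.G2 x) : K.D (a * b) = K.comp (K.D a) (K.D b) :=
  K.D_mul a b

theorem D_one' (x : K.Obj) : K.D (1 : K.G2 x) = K.id x :=
  K.D_one x

theorem Ad_mul' {x y : K.Obj} (g : K.Hom x y) (a b : K.G2 x) :
    K.Ad g (a * b) = K.Ad g a * K.Ad g b :=
  K.Ad_mul g a b

theorem Ad_inv {x y : K.Obj} (g : K.Hom x y) (a : K.G2 x) : K.Ad g a⁻¹ = (K.Ad g a)⁻¹ :=
  map_inv (MonoidHom.mk' (K.Ad g) (K.Ad_mul g)) a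

theorem inv_comp_cancel_left {x y z : K.Obj} (f : K.Hom y z) (g : K.Hom x y) :
    K.comp (K.inv f) (K.comp f g) = g := by
  rw [← K.comp_assoc, K.inv_comp, K.id_comp]

theorem comp_inv_cancel_left {x y z : K.Obj} (f : K.Hom z y) (g : K.Hom x y) :
    K.comp f (K.comp (K.inv f) g) = g := by
  rw [← K.comp_assoc, K.comp_inv, K.id_comp]

theorem inv_eq_of_comp_eq_id {x y : K.Obj} {f : K.Hom x y} {g : K.Hom y x}
    (h : K.comp g f = K.id x) : K.inv f = g := by
  rw [← K.id_comp (K.inv f), ← h, K.comp_assoc, K.comp_inv, K.comp_id]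

theorem inv_inv_hom {x y : K.Obj} (f : K.Hom x y) : K.inv (K.inv f) = f :=
  inv_eq_of_comp_eq_id (K.comp_inv f)

theorem inv_comp_rev {x y z : K.Obj} (g : K.Hom y z) (f : K.Hom x y) :
    K.inv (K.comp g f) = K.comp (K.inv f) (K.inv g) :=
  inv_eq_of_comp_eq_id (by rw [K.comp_assoc, inv_comp_cancel_left, K.inv_comp])

theorem D_inv {x : K.Obj} (a : K.G2 x) : K.D a⁻¹ = K.inv (K.D a) :=
  (inv_eq_of_comp_eq_id (by rw [← D_mul', inv_mul_cancel, D_one'])).symm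

theorem Ad_inv_Ad {x y : K.Obj} (f : K.Hom x y) (a : K.G2 x) :
    K.Ad (K.inv f) (K.Ad f a) = a := by
  rw [← K.Ad_comp, K.inv_comp, K.Ad_id]

theorem inv_mul_mul_eq_Ad_inv_D {x : K.Obj} (u w : K.G2 x) :
    u⁻¹ * w * u = K.Ad (K.inv (K.D u)) w := by
  rw [← D_inv, K.peiffer]
  exact congrArg (u⁻¹ * w * ·) (inv_inv u).symm

theorem hcast_hcast {x x' x'' y y' y'' : K.Obj} (ex : x = x') (ey : y = y')
    (ex' : x' = x'') (ey' : y' = y'') (f : K.Hom x y) :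
    K.hcast ex' ey' (K.hcast ex ey f) = K.hcast (ex.trans ex') (ey.trans ey') f := by
  subst ex ey ex' ey'; rfl

theorem cast2_cast2 {x x' x'' : K.Obj} (e : x = x') (e' : x' = x'') (a : K.G2 x) :
    K.cast2 e' (K.cast2 e a) = K.cast2 (e.trans e') a := by
  subst e e'; rfl

theorem comp_hcast {x y z x' y' z' : K.Obj} (ex : x = x') (ey : y = y') (ez : z = z')
    (g : K.Hom y z) (f : K.Hom x y) :
    K.comp (K.hcast ey ez g) (K.hcast ex ey f) = K.hcast ex ez (K.comp g f) := by
  subst ex ey ez; rfl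

theorem inv_hcast {x y x' y' : K.Obj} (ex : x = x') (ey : y = y') (f : K.Hom x y) :
    K.inv (K.hcast ex ey f) = K.hcast ey ex (K.inv f) := by
  subst ex ey; rfl

theorem D_cast2 {x x' : K.Obj} (e : x = x') (a : K.G2 x) :
    K.D (K.cast2 e a) = K.hcast e e (K.D a) := by
  subst e; rfl

theorem cast2_mul {x x' : K.Obj} (e : x = x') (a b : K.G2 x) :
    K.cast2 e (a * b) = K.cast2 e a * K.cast2 e b := by
  subst e; rfl

theorem cast2_inv {x x' : K.Obj} (e : x = x') (a : K.G2 x) :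
    K.cast2 e a⁻¹ = (K.cast2 e a)⁻¹ := by
  subst e; rfl

theorem Ad_hcast {x y x' y' : K.Obj} (ex : x = x') (ey : y = y') (g : K.Hom x y)
    (a : K.G2 x) :
    K.Ad (K.hcast ex ey g) (K.cast2 ex a) = K.cast2 ey (K.Ad g a) := by
  subst ex ey; rfl

theorem cast2_inj {x x' : K.Obj} (e : x = x') {a b : K.G2 x} :
    K.cast2 e a = K.cast2 e b ↔ a = b := by
  subst e; rfl

theorem pi0Rel_of_mk_eq {x y : K.Obj} (h : Quot.mk K.pi0Rel x = Quot.mk K.pi0Rel y) :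
    K.pi0Rel x y :=
  have hK : Equivalence K.pi0Rel :=
    ⟨fun x => ⟨K.id x⟩, fun ⟨f⟩ => ⟨K.inv f⟩, fun ⟨f⟩ ⟨f'⟩ => ⟨K.comp f' f⟩⟩
  hK.eqvGen_iff.mp (Quot.eqvGen_exact h)

theorem homRel_of_mk_eq {x x' : K.Obj} {g g' : K.Hom x x'}
    (h : Quot.mk (K.homRel x x') g = Quot.mk (K.homRel x x') g') :
    ∃ a : K.G2 x, g' = K.comp g (K.D a) := by
  have hK : Equivalence (K.homRel x x') := by
    refine ⟨fun g => ⟨1, by rw [D_one', K.comp_id]⟩, ?_, ?_⟩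
    · rintro g _ ⟨a, rfl⟩
      exact ⟨a⁻¹, by rw [K.comp_assoc, ← D_mul', mul_inv_cancel, D_one', K.comp_id]⟩
    · rintro g _ _ ⟨a, rfl⟩ ⟨b, rfl⟩
      exact ⟨a * b, by rw [K.comp_assoc, ← D_mul']⟩
  exact hK.eqvGen_iff.mp (Quot.eqvGen_exact h)

end CrossedGroupoid

namespace CrossedGroupoidHom

open CrossedGroupoid

variable {K L : CrossedGroupoid} (F : CrossedGroupoidHom K L)

theorem map2_mul' {x : K.Obj} (a b : K.G2 x) : F.map2 (a * b) = F.map2 a * F.map2 b :=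
  F.map2_mul a b

theorem map2_one (x : K.Obj) : F.map2 (1 : K.G2 x) = 1 :=
  map_one (MonoidHom.mk' F.map2 F.map2_mul)

theorem map2_inv {x : K.Obj} (a : K.G2 x) : F.map2 a⁻¹ = (F.map2 a)⁻¹ :=
  map_inv (MonoidHom.mk' F.map2 F.map2_mul) a

theorem map1_inv {x y : K.Obj} (f : K.Hom x y) : F.map1 (K.inv f) = L.inv (F.map1 f) :=
  (inv_eq_of_comp_eq_id (by rw [← F.map1_comp, K.inv_comp, F.map1_id])).symm

theorem map1_hcast {x y x' y' : K.Obj} (ex : x = x') (ey : y = y') (f : K.Hom x y) :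
    F.map1 (K.hcast ex ey f) = L.hcast (congrArg F.obj ex) (congrArg F.obj ey) (F.map1 f) := by
  subst ex ey; rfl

theorem map2_cast2 {x x' : K.Obj} (e : x = x') (a : K.G2 x) :
    F.map2 (K.cast2 e a) = L.cast2 (congrArg F.obj e) (F.map2 a) := by
  subst e; rfl

variable {F}

theorem map1_congr {F' : CrossedGroupoidHom K L} (h : F = F') {x y : K.Obj} (f : K.Hom x y) :
    F'.map1 f = L.hcast (congrFun (congrArg obj h) x) (congrFun (congrArg obj h) y)
      (F.map1 f) := by
  subst h; rfl

theorem map2_congr {F' : CrossedGroupoidHom K L} (h : F = F') {x : K.Obj} (a : K.G2 x) :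
    F'.map2 a = L.cast2 (congrFun (congrArg obj h) x) (F.map2 a) := by
  subst h; rfl

namespace IsWeakEquiv

theorem exists_hom_to_obj (hF : F.IsWeakEquiv) (y : L.Obj) :
    ∃ x, Nonempty (L.Hom y (F.obj x)) := by
  obtain ⟨p, hp⟩ := hF.1.2 (Quot.mk _ y)
  obtain ⟨x, rfl⟩ := Quot.exists_rep p
  exact ⟨x, ⟨L.inv (L.pi0Rel_of_mk_eq hp).some⟩⟩

theorem nonempty_hom_of_map1 (hF : F.IsWeakEquiv) {x y : K.Obj} (h : L.Hom (F.obj x) (F.obj y)) :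
    Nonempty (K.Hom x y) :=
  K.pi0Rel_of_mk_eq (hF.1.1 (Quot.sound ⟨h⟩))

theorem exists_map1_comp_D (hF : F.IsWeakEquiv) {x y : K.Obj} (h : L.Hom (F.obj x) (F.obj y)) :
    ∃ (g : K.Hom x y) (c : L.G2 (F.obj x)), h = L.comp (F.map1 g) (L.D c) := by
  obtain ⟨g₀⟩ := hF.nonempty_hom_of_map1 h
  obtain ⟨p, hp⟩ := (hF.2.1 y).2 (Quot.mk _ (L.comp h (L.inv (F.map1 g₀))))
  obtain ⟨u, rfl⟩ := Quot.exists_rep p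
  obtain ⟨c, hc⟩ := L.homRel_of_mk_eq hp
  refine ⟨K.comp u g₀, L.Ad (L.inv (F.map1 g₀)) c, ?_⟩
  calc h = L.comp (L.comp h (L.inv (F.map1 g₀))) (F.map1 g₀) := by
        rw [L.comp_assoc, L.inv_comp, L.comp_id]
    _ = _ := by
        rw [hc, F.map1_comp, L.D_Ad, inv_inv_hom]
        simp only [L.comp_assoc, comp_inv_cancel_left]

theorem exists_D_eq_and_map2_eq (hF : F.IsWeakEquiv) {x : K.Obj} (k : K.Hom x x)
    (b : L.G2 (F.obj x)) (h : F.map1 k = L.D b) : ∃ a, K.D a = k ∧ F.map2 a = b := by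
  have hk : F.pi1map x (Quot.mk _ (K.id x)) = F.pi1map x (Quot.mk _ k) :=
    Quot.sound ⟨b, by rw [F.map1_id, L.id_comp, h]⟩
  obtain ⟨a₀, ha₀⟩ := K.homRel_of_mk_eq ((hF.2.1 x).1 hk)
  rw [K.id_comp] at ha₀
  have hker : L.D (b * (F.map2 a₀)⁻¹) = L.id (F.obj x) := by
    rw [D_mul', D_inv, ← F.map_D, ← ha₀, h, L.comp_inv]
  obtain ⟨⟨τ, hτ⟩, hτF⟩ := (hF.2.2 x).2 ⟨_, hker⟩
  have hτF' : F.map2 τ = b * (F.map2 a₀)⁻¹ := congrArg Subtype.val hτF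
  refine ⟨τ * a₀, by rw [D_mul', hτ, K.id_comp, ha₀], ?_⟩
  rw [map2_mul', hτF', inv_mul_cancel_right]

theorem eq_of_D_eq_of_map2_eq (hF : F.IsWeakEquiv) {x : K.Obj} {a a' : K.G2 x} (hD : K.D a = K.D a')
    (hFa : F.map2 a = F.map2 a') : a = a' := by
  have hker : K.D (a * a'⁻¹) = K.id x := by rw [D_mul', D_inv, hD, K.comp_inv]
  have h := (hF.2.2 x).1 (a₁ := ⟨_, hker⟩) (a₂ := ⟨1, K.D_one x⟩) <| Subtype.ext <| by
    change F.map2 (a * a'⁻¹) = F.map2 1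
    rw [map2_mul', map2_inv, hFa, mul_inv_cancel, map2_one]
  exact mul_inv_eq_one.mp (congrArg Subtype.val h)

-- The vertex objects `H.X (F.objD x) p i` are only propositionally equal to images of objects.
theorem exists_hcast_map1_comp_D (hF : F.IsWeakEquiv) {x y : K.Obj} {x' y' : L.Obj}
    (ex : F.obj x = x') (ey : F.obj y = y') (h : L.Hom x' y') :
    ∃ (g : K.Hom x y) (c : L.G2 x'), h = L.comp (L.hcast ex ey (F.map1 g)) (L.D c) := by
  subst ex ey
  exact hF.exists_map1_comp_D h

theorem exists_D_eq_and_cast2_map2_eq (hF : F.IsWeakEquiv) {x : K.Obj} {x' : L.Obj}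
    (e : F.obj x = x') (k : K.Hom x x) (b : L.G2 x') (h : L.hcast e e (F.map1 k) = L.D b) :
    ∃ a, K.D a = k ∧ L.cast2 e (F.map2 a) = b := by
  subst e
  exact hF.exists_D_eq_and_map2_eq k b h

end IsWeakEquiv

end CrossedGroupoidHom

theorem comp_edgeMap {p q : ℕ} (α : Fin (p + 1) →o Fin (q + 1)) (i j : Fin (p + 1))
    (h : i ≤ j) : α.comp (edgeMap i j h) = edgeMap (α i) (α j) (α.monotone h) :=
  OrderHom.ext _ _ (funext fun m => by fin_cases m <;> rfl)

namespace CosimplicialCrossedGroupoid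

open CrossedGroupoid CrossedGroupoidHom

variable (G : CosimplicialCrossedGroupoid)

def push1' {x x' : (G.obj 0).Obj} {p q : ℕ} (α : Fin (p + 1) →o Fin (q + 1))
    {i j : Fin (p + 1)} (g : (G.obj p).Hom (G.X x p i) (G.X x' p j)) :
    (G.obj q).Hom (G.X x q (α i)) (G.X x' q (α j)) :=
  (G.obj q).hcast (G.X_push x α i) (G.X_push x' α j) ((G.map α).map1 g)

-- `vertex1 f i`, `edge1 g i j`, `edge2 c i j` and `face2 a i j k` are the paper's
-- `f₍ᵢ₎`, `g₍ᵢ,ⱼ₎`, `c₍ᵢ,ⱼ₎` and `a₍ᵢ,ⱼ,ₖ₎`.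
def vertex1 {x x' : (G.obj 0).Obj} (f : (G.obj 0).Hom x x') {q : ℕ} (i : Fin (q + 1)) :
    (G.obj q).Hom (G.X x q i) (G.X x' q i) :=
  (G.map (vtxMap i)).map1 f

def edge1 {x : (G.obj 0).Obj} (g : (G.obj 1).Hom (G.X x 1 0) (G.X x 1 1)) {q : ℕ}
    (i j : Fin (q + 1)) (h : i ≤ j) : (G.obj q).Hom (G.X x q i) (G.X x q j) :=
  G.push1 (edgeMap i j h) g

def edge2 {x : (G.obj 0).Obj} (c : (G.obj 1).G2 (G.X x 1 0)) {q : ℕ} (i j : Fin (q + 1))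
    (h : i ≤ j) : (G.obj q).G2 (G.X x q i) :=
  G.push2 (edgeMap i j h) c

def face2 {x : (G.obj 0).Obj} (a : (G.obj 2).G2 (G.X x 2 0)) {q : ℕ} (i j k : Fin (q + 1))
    (hij : i ≤ j) (hjk : j ≤ k) : (G.obj q).G2 (G.X x q i) :=
  G.push2 (triMap i j k hij hjk) a

def cocycleFailure {x : (G.obj 0).Obj} (g : (G.obj 1).Hom (G.X x 1 0) (G.X x 1 1)) {q : ℕ}
    (i j k : Fin (q + 1)) (hij : i ≤ j) (hjk : j ≤ k) :
    (G.obj q).Hom (G.X x q i) (G.X x q i) :=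
  (G.obj q).comp ((G.obj q).comp ((G.obj q).inv (G.edge1 g i k (hij.trans hjk)))
    (G.edge1 g j k hjk)) (G.edge1 g i j hij)

def twoCocycleLhs {x : (G.obj 0).Obj} (a : (G.obj 2).G2 (G.X x 2 0)) :
    (G.obj 3).G2 (G.X x 3 0) :=
  (G.face2 a 0 1 3 (by decide) (by decide))⁻¹ * G.face2 a 0 2 3 (by decide) (by decide) *
    G.face2 a 0 1 2 (by decide) (by decide)

def twoCocycleRhs {x : (G.obj 0).Obj} (g : (G.obj 1).Hom (G.X x 1 0) (G.X x 1 1))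
    (a : (G.obj 2).G2 (G.X x 2 0)) : (G.obj 3).G2 (G.X x 3 0) :=
  (G.obj 3).Ad ((G.obj 3).inv (G.edge1 g 0 1 (by decide))) (G.face2 a 1 2 3 (by decide) (by decide))

def transportG {x x' : (G.obj 0).Obj} (f : (G.obj 0).Hom x x')
    (g : (G.obj 1).Hom (G.X x 1 0) (G.X x 1 1)) (c : (G.obj 1).G2 (G.X x 1 0)) :
    (G.obj 1).Hom (G.X x' 1 0) (G.X x' 1 1) :=
  (G.obj 1).comp ((G.obj 1).comp ((G.obj 1).comp (G.vertex1 f 1) g) ((G.obj 1).D c))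
    ((G.obj 1).inv (G.vertex1 f 0))

variable {G} {x x' x'' : (G.obj 0).Obj}

theorem isDescent_iff {g : (G.obj 1).Hom (G.X x 1 0) (G.X x 1 1)}
    {a : (G.obj 2).G2 (G.X x 2 0)} :
    G.IsDescent x g a ↔ G.cocycleFailure g (0 : Fin 3) 1 2 (by decide) (by decide) =
      (G.obj 2).D a ∧ G.twoCocycleLhs a = G.twoCocycleRhs g a :=
  Iff.rfl

theorem isGauge_iff {g : (G.obj 1).Hom (G.X x 1 0) (G.X x 1 1)}
    {a : (G.obj 2).G2 (G.X x 2 0)} {g' : (G.obj 1).Hom (G.X x' 1 0) (G.X x' 1 1)}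
    {a' : (G.obj 2).G2 (G.X x' 2 0)} {f : (G.obj 0).Hom x x'} {c : (G.obj 1).G2 (G.X x 1 0)} :
    G.IsGauge x g a x' g' a' f c ↔ g' = G.transportG f g c ∧ a' = G.transportA f g a c :=
  Iff.rfl

theorem transportA_eq (f : (G.obj 0).Hom x x') (g : (G.obj 1).Hom (G.X x 1 0) (G.X x 1 1))
    (a : (G.obj 2).G2 (G.X x 2 0)) (c : (G.obj 1).G2 (G.X x 1 0)) :
    G.transportA f g a c = (G.obj 2).Ad (G.vertex1 f 0)
      ((G.edge2 c 0 2 (by decide))⁻¹ * a *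
        (G.obj 2).Ad ((G.obj 2).inv (G.edge1 g 0 1 (by decide))) (G.edge2 c 1 2 (by decide)) *
        G.edge2 c 0 1 (by decide)) :=
  rfl

section push

variable {p q r : ℕ} (α : Fin (p + 1) →o Fin (q + 1))

theorem push1'_comp {i j k : Fin (p + 1)} (g : (G.obj p).Hom (G.X x' p j) (G.X x'' p k))
    (f : (G.obj p).Hom (G.X x p i) (G.X x' p j)) :
    G.push1' α ((G.obj p).comp g f) = (G.obj q).comp (G.push1' α g) (G.push1' α f) := by
  simp only [push1', (G.map α).map1_comp, comp_hcast]

theorem push1'_inv {i j : Fin (p + 1)} (f : (G.obj p).Hom (G.X x p i) (G.X x' p j)) :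
    G.push1' α ((G.obj p).inv f) = (G.obj q).inv (G.push1' α f) := by
  simp only [push1', (G.map α).map1_inv, inv_hcast]

theorem push1'_D {i : Fin (p + 1)} (a : (G.obj p).G2 (G.X x p i)) :
    G.push1' α ((G.obj p).D a) = (G.obj q).D (G.push2 α a) := by
  simp only [push1', push2, (G.map α).map_D, D_cast2]

theorem push2_mul {i : Fin (p + 1)} (a b : (G.obj p).G2 (G.X x p i)) :
    G.push2 α (a * b) = G.push2 α a * G.push2 α b := by
  simp only [push2, (G.map α).map2_mul', cast2_mul]

theorem push2_inv {i : Fin (p + 1)} (a : (G.obj p).G2 (G.X x p i)) :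
    G.push2 α a⁻¹ = (G.push2 α a)⁻¹ := by
  simp only [push2, (G.map α).map2_inv, cast2_inv]

theorem push2_Ad {i j : Fin (p + 1)} (g : (G.obj p).Hom (G.X x p i) (G.X x' p j))
    (a : (G.obj p).G2 (G.X x p i)) :
    G.push2 α ((G.obj p).Ad g a) = (G.obj q).Ad (G.push1' α g) (G.push2 α a) := by
  simp only [push2, push1', (G.map α).map_Ad, Ad_hcast]

theorem push1'_push1' (β : Fin (q + 1) →o Fin (r + 1)) {i j : Fin (p + 1)}
    (g : (G.obj p).Hom (G.X x p i) (G.X x' p j)) :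
    G.push1' β (G.push1' α g) = G.push1' (β.comp α) g := by
  simp only [push1', map1_hcast, hcast_hcast, map1_congr (G.map_comp β α).symm g]
  rfl

theorem push2_push2 (β : Fin (q + 1) →o Fin (r + 1)) {i : Fin (p + 1)}
    (a : (G.obj p).G2 (G.X x p i)) :
    G.push2 β (G.push2 α a) = G.push2 (β.comp α) a := by
  simp only [push2, map2_cast2, cast2_cast2, map2_congr (G.map_comp β α).symm a]
  rfl

theorem push1'_congr {α' : Fin (p + 1) →o Fin (q + 1)} (h : α = α') {i j : Fin (p + 1)}
    (g : (G.obj p).Hom (G.X x p i) (G.X x' p j)) :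
    HEq (G.push1' α g) (G.push1' α' g) := by
  subst h; rfl

theorem push2_congr {α' : Fin (p + 1) →o Fin (q + 1)} (h : α = α') {i : Fin (p + 1)}
    (a : (G.obj p).G2 (G.X x p i)) :
    HEq (G.push2 α a) (G.push2 α' a) := by
  subst h; rfl

theorem push1'_vertex1 (f : (G.obj 0).Hom x x') (i : Fin (p + 1)) :
    G.push1' α (G.vertex1 f i) = G.vertex1 f (α i) := by
  change _ = (G.map (α.comp (vtxMap i))).map1 f
  rw [map1_congr (G.map_comp α (vtxMap i)).symm f]
  rfl

theorem push1'_edge1 (g : (G.obj 1).Hom (G.X x 1 0) (G.X x 1 1)) (i j : Fin (p + 1))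
    (h : i ≤ j) : G.push1' α (G.edge1 g i j h) = G.edge1 g (α i) (α j) (α.monotone h) :=
  (G.push1'_push1' _ α g).trans (eq_of_heq (G.push1'_congr _ (comp_edgeMap α i j h) g))

theorem push2_edge2 (c : (G.obj 1).G2 (G.X x 1 0)) (i j : Fin (p + 1)) (h : i ≤ j) :
    G.push2 α (G.edge2 c i j h) = G.edge2 c (α i) (α j) (α.monotone h) :=
  (G.push2_push2 _ α c).trans (eq_of_heq (G.push2_congr _ (comp_edgeMap α i j h) c))

end push

end CosimplicialCrossedGroupoid

namespace CrossedGroupoid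

variable {K : CrossedGroupoid}

theorem D_tetrahedron {x0 x1 x2 x3 : K.Obj} {g01 : K.Hom x0 x1} {g12 : K.Hom x1 x2}
    {g02 : K.Hom x0 x2} {g13 : K.Hom x1 x3} {g23 : K.Hom x2 x3} {g03 : K.Hom x0 x3}
    {a012 a013 a023 : K.G2 x0} {a123 : K.G2 x1}
    (h012 : K.D a012 = K.comp (K.comp (K.inv g02) g12) g01)
    (h013 : K.D a013 = K.comp (K.comp (K.inv g03) g13) g01)
    (h023 : K.D a023 = K.comp (K.comp (K.inv g03) g23) g02)
    (h123 : K.D a123 = K.comp (K.comp (K.inv g13) g23) g12) :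
    K.D (a013⁻¹ * a023 * a012) = K.D (K.Ad (K.inv g01) a123) := by
  rw [D_mul', D_mul', D_inv, K.D_Ad, h012, h013, h023, h123, inv_inv_hom]
  simp only [K.comp_assoc, inv_comp_rev, inv_inv_hom, comp_inv_cancel_left]

-- The twisted 2-cocycle condition for a gauge transform, before conjugating by `f₍₀₎`.
theorem tetrahedron_gauge {x0 x1 x2 : K.Obj} {g01 : K.Hom x0 x1} {g12 : K.Hom x1 x2}
    {g02 : K.Hom x0 x2} {a012 a013 a023 : K.G2 x0} {a123 : K.G2 x1}
    (h012 : K.D a012 = K.comp (K.comp (K.inv g02) g12) g01)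
    (h0123 : a013⁻¹ * a023 * a012 = K.Ad (K.inv g01) a123)
    (c01 c02 c03 : K.G2 x0) (c12 c13 : K.G2 x1) (c23 : K.G2 x2) :
    (c03⁻¹ * a013 * K.Ad (K.inv g01) c13 * c01)⁻¹ *
        (c03⁻¹ * a023 * K.Ad (K.inv g02) c23 * c02) *
        (c02⁻¹ * a012 * K.Ad (K.inv g01) c12 * c01) =
      c01⁻¹ * K.Ad (K.inv g01) (c13⁻¹ * a123 * K.Ad (K.inv g12) c23 * c12) * c01 := by
  have hconj : a012⁻¹ * K.Ad (K.inv g02) c23 * a012 =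
      K.Ad (K.inv g01) (K.Ad (K.inv g12) c23) := by
    rw [inv_mul_mul_eq_Ad_inv_D, ← K.Ad_comp, ← K.Ad_comp, h012]
    simp only [K.comp_assoc, inv_comp_rev, inv_inv_hom, K.comp_inv, K.comp_id]
  simp only [Ad_mul', Ad_inv, ← h0123, ← hconj]
  group

theorem eq_comp_D_Ad_of_conj_eq {x y x' y' : K.Obj}
    {f₀ : K.Hom x x'} {f₁ : K.Hom y y'} {h : K.Hom x y} {m : K.Hom x' y'} {d : K.G2 x'}
    (e : K.comp (K.comp f₁ h) (K.inv f₀) = K.comp m (K.D d)) :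
    m = K.comp (K.comp (K.comp f₁ h) (K.D (K.Ad (K.inv f₀) d⁻¹))) (K.inv f₀) := by
  rw [K.D_Ad, D_inv, inv_inv_hom, ← K.comp_id m, ← K.comp_inv (K.D d), ← K.comp_assoc, ← e]
  simp only [K.comp_assoc, K.comp_inv, K.comp_id]

end CrossedGroupoid

namespace CosimplicialCrossedGroupoid

open CrossedGroupoid

variable {G : CosimplicialCrossedGroupoid} {x x' : (G.obj 0).Obj}

theorem D_face2_of_cocycleFailure_eq {g : (G.obj 1).Hom (G.X x 1 0) (G.X x 1 1)}
    {a : (G.obj 2).G2 (G.X x 2 0)}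
    (h : G.cocycleFailure g (0 : Fin 3) 1 2 (by decide) (by decide) = (G.obj 2).D a) {q : ℕ}
    (i j k : Fin (q + 1)) (hij : i ≤ j) (hjk : j ≤ k) :
    (G.obj q).D (G.face2 a i j k hij hjk) = G.cocycleFailure g i j k hij hjk := by
  have h' := congrArg (G.push1' (triMap i j k hij hjk)) h
  simp only [cocycleFailure, push1'_comp, push1'_inv, push1'_D, push1'_edge1] at h'
  exact h'.symm

theorem D_twoCocycleLhs_eq {g : (G.obj 1).Hom (G.X x 1 0) (G.X x 1 1)}
    {a : (G.obj 2).G2 (G.X x 2 0)}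
    (h : G.cocycleFailure g (0 : Fin 3) 1 2 (by decide) (by decide) = (G.obj 2).D a) :
    (G.obj 3).D (G.twoCocycleLhs a) = (G.obj 3).D (G.twoCocycleRhs g a) :=
  D_tetrahedron (D_face2_of_cocycleFailure_eq h 0 1 2 (by decide) (by decide))
    (D_face2_of_cocycleFailure_eq h 0 1 3 (by decide) (by decide))
    (D_face2_of_cocycleFailure_eq h 0 2 3 (by decide) (by decide))
    (D_face2_of_cocycleFailure_eq h 1 2 3 (by decide) (by decide))

theorem edge1_transportG (f : (G.obj 0).Hom x x') (g : (G.obj 1).Hom (G.X x 1 0) (G.X x 1 1))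
    (c : (G.obj 1).G2 (G.X x 1 0)) {q : ℕ} (i j : Fin (q + 1)) (h : i ≤ j) :
    G.edge1 (G.transportG f g c) i j h =
      (G.obj q).comp ((G.obj q).comp ((G.obj q).comp (G.vertex1 f j) (G.edge1 g i j h))
        ((G.obj q).D (G.edge2 c i j h))) ((G.obj q).inv (G.vertex1 f i)) := by
  change G.push1' (edgeMap i j h) (G.transportG f g c) = _
  simp only [transportG, push1'_comp, push1'_inv, push1'_D, push1'_vertex1]
  rfl

theorem face2_transportA (f : (G.obj 0).Hom x x') (g : (G.obj 1).Hom (G.X x 1 0) (G.X x 1 1))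
    (a : (G.obj 2).G2 (G.X x 2 0)) (c : (G.obj 1).G2 (G.X x 1 0)) {q : ℕ}
    (i j k : Fin (q + 1)) (hij : i ≤ j) (hjk : j ≤ k) :
    G.face2 (G.transportA f g a c) i j k hij hjk = (G.obj q).Ad (G.vertex1 f i)
      ((G.edge2 c i k (hij.trans hjk))⁻¹ * G.face2 a i j k hij hjk *
        (G.obj q).Ad ((G.obj q).inv (G.edge1 g i j hij)) (G.edge2 c j k hjk) *
        G.edge2 c i j hij) := by
  rw [face2, transportA_eq]
  simp only [push2_Ad, push2_mul, push2_inv, push1'_inv, push1'_vertex1, push1'_edge1,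
    push2_edge2]
  rfl

theorem isDescent_transport (f : (G.obj 0).Hom x x')
    {g : (G.obj 1).Hom (G.X x 1 0) (G.X x 1 1)} {a : (G.obj 2).G2 (G.X x 2 0)}
    (c : (G.obj 1).G2 (G.X x 1 0)) (hd : G.IsDescent x g a) :
    G.IsDescent x' (G.transportG f g c) (G.transportA f g a c) := by
  obtain ⟨hd1, hd2⟩ := isDescent_iff.mp hd
  refine isDescent_iff.mpr ⟨?_, ?_⟩
  · simp only [cocycleFailure, edge1_transportG, transportA_eq, (G.obj 2).D_Ad, D_mul', D_inv,
      ← hd1]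
    simp only [(G.obj 2).comp_assoc, inv_comp_rev, inv_inv_hom, inv_comp_cancel_left,
      comp_inv_cancel_left]
  · simp only [twoCocycleLhs, twoCocycleRhs, face2_transportA, edge1_transportG, inv_comp_rev,
      inv_inv_hom, (G.obj 3).Ad_comp, Ad_inv_Ad, ← inv_mul_mul_eq_Ad_inv_D, ← Ad_inv,
      ← Ad_mul']
    exact congrArg _
      (tetrahedron_gauge (D_face2_of_cocycleFailure_eq hd1 0 1 2 _ _) hd2 _ _ _ _ _ _)

end CosimplicialCrossedGroupoid

-- `app_X` is stated with `(F.app 0).obj x`, the types of `mapG` and `mapA` with `F.objD x`.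
attribute [reducible] CosimplicialMor.objD

namespace CosimplicialMor

open CrossedGroupoid CrossedGroupoidHom CosimplicialCrossedGroupoid

variable {G H : CosimplicialCrossedGroupoid} (F : CosimplicialMor G H)

def map1At {x : (G.obj 0).Obj} {p : ℕ} {i j : Fin (p + 1)}
    (g : (G.obj p).Hom (G.X x p i) (G.X x p j)) :
    (H.obj p).Hom (H.X (F.objD x) p i) (H.X (F.objD x) p j) :=
  (H.obj p).hcast (F.app_X x p i) (F.app_X x p j) ((F.app p).map1 g)

def map2At {x : (G.obj 0).Obj} {p : ℕ} {i : Fin (p + 1)} (a : (G.obj p).G2 (G.X x p i)) :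
    (H.obj p).G2 (H.X (F.objD x) p i) :=
  (H.obj p).cast2 (F.app_X x p i) ((F.app p).map2 a)

variable {x : (G.obj 0).Obj} {p q : ℕ}

theorem map1At_comp {i j k : Fin (p + 1)} (g : (G.obj p).Hom (G.X x p j) (G.X x p k))
    (f : (G.obj p).Hom (G.X x p i) (G.X x p j)) :
    F.map1At ((G.obj p).comp g f) = (H.obj p).comp (F.map1At g) (F.map1At f) := by
  simp only [map1At, (F.app p).map1_comp, comp_hcast]

theorem map1At_inv {i j : Fin (p + 1)} (f : (G.obj p).Hom (G.X x p i) (G.X x p j)) :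
    F.map1At ((G.obj p).inv f) = (H.obj p).inv (F.map1At f) := by
  simp only [map1At, (F.app p).map1_inv, inv_hcast]

theorem map2At_mul {i : Fin (p + 1)} (a b : (G.obj p).G2 (G.X x p i)) :
    F.map2At (a * b) = F.map2At a * F.map2At b := by
  simp only [map2At, (F.app p).map2_mul', cast2_mul]

theorem map2At_inv {i : Fin (p + 1)} (a : (G.obj p).G2 (G.X x p i)) :
    F.map2At a⁻¹ = (F.map2At a)⁻¹ := by
  simp only [map2At, (F.app p).map2_inv, cast2_inv]

theorem map2At_Ad {i j : Fin (p + 1)} (g : (G.obj p).Hom (G.X x p i) (G.X x p j))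
    (a : (G.obj p).G2 (G.X x p i)) :
    F.map2At ((G.obj p).Ad g a) = (H.obj p).Ad (F.map1At g) (F.map2At a) := by
  simp only [map2At, map1At, (F.app p).map_Ad, Ad_hcast]

theorem push1'_map1At (α : Fin (p + 1) →o Fin (q + 1)) {i j : Fin (p + 1)}
    (g : (G.obj p).Hom (G.X x p i) (G.X x p j)) :
    H.push1' α (F.map1At g) = F.map1At (G.push1' α g) := by
  have hnat : (H.map α).map1 ((F.app p).map1 g) =
      (H.obj q).hcast _ _ ((F.app q).map1 ((G.map α).map1 g)) :=
    map1_congr (F.naturality α) g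
  simp only [push1', map1At, map1_hcast, hcast_hcast]
  rw [hnat]
  exact hcast_hcast _ _ _ _ _

theorem push2_map2At (α : Fin (p + 1) →o Fin (q + 1)) {i : Fin (p + 1)}
    (a : (G.obj p).G2 (G.X x p i)) :
    H.push2 α (F.map2At a) = F.map2At (G.push2 α a) := by
  have hnat : (H.map α).map2 ((F.app p).map2 a) =
      (H.obj q).cast2 _ ((F.app q).map2 ((G.map α).map2 a)) :=
    map2_congr (F.naturality α) a
  simp only [push2, map2At, map2_cast2, cast2_cast2]
  rw [hnat]
  exact cast2_cast2 _ _ _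

theorem edge1_mapG (g : (G.obj 1).Hom (G.X x 1 0) (G.X x 1 1)) (i j : Fin (q + 1))
    (h : i ≤ j) : H.edge1 (F.mapG g) i j h = F.map1At (G.edge1 g i j h) :=
  F.push1'_map1At _ g

theorem face2_mapA (a : (G.obj 2).G2 (G.X x 2 0)) (i j k : Fin (q + 1)) (hij : i ≤ j)
    (hjk : j ≤ k) : H.face2 (F.mapA a) i j k hij hjk = F.map2At (G.face2 a i j k hij hjk) :=
  F.push2_map2At _ a

theorem cocycleFailure_mapG (g : (G.obj 1).Hom (G.X x 1 0) (G.X x 1 1)) (i j k : Fin (q + 1))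
    (hij : i ≤ j) (hjk : j ≤ k) :
    H.cocycleFailure (F.mapG g) i j k hij hjk = F.map1At (G.cocycleFailure g i j k hij hjk) := by
  simp only [cocycleFailure, edge1_mapG, map1At_comp, map1At_inv]

theorem twoCocycleLhs_mapA (a : (G.obj 2).G2 (G.X x 2 0)) :
    H.twoCocycleLhs (F.mapA a) = F.map2At (G.twoCocycleLhs a) := by
  simp only [twoCocycleLhs, face2_mapA, map2At_mul, map2At_inv]

theorem twoCocycleRhs_mapG (g : (G.obj 1).Hom (G.X x 1 0) (G.X x 1 1))
    (a : (G.obj 2).G2 (G.X x 2 0)) :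
    H.twoCocycleRhs (F.mapG g) (F.mapA a) = F.map2At (G.twoCocycleRhs g a) := by
  simp only [twoCocycleRhs, face2_mapA, edge1_mapG, map2At_Ad, map1At_inv]

theorem exists_mapG_eq_transportG (hF : F.IsWeakEquiv) {y : (H.obj 0).Obj}
    (h : (H.obj 1).Hom (H.X y 1 0) (H.X y 1 1)) :
    ∃ (x : (G.obj 0).Obj) (f : (H.obj 0).Hom y (F.objD x))
      (g : (G.obj 1).Hom (G.X x 1 0) (G.X x 1 1)) (c : (H.obj 1).G2 (H.X y 1 0)),
      F.mapG g = H.transportG f h c := by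
  obtain ⟨x, ⟨f⟩⟩ := (hF 0).exists_hom_to_obj y
  obtain ⟨g, d, hgd⟩ := (hF 1).exists_hcast_map1_comp_D (F.app_X x 1 0) (F.app_X x 1 1)
    ((H.obj 1).comp ((H.obj 1).comp (H.vertex1 f 1) h) ((H.obj 1).inv (H.vertex1 f 0)))
  exact ⟨x, f, g, _, eq_comp_D_Ad_of_conj_eq hgd⟩

theorem exists_isDescent_mapA_eq (hF : F.IsWeakEquiv)
    {g : (G.obj 1).Hom (G.X x 1 0) (G.X x 1 1)} {b : (H.obj 2).G2 (H.X (F.objD x) 2 0)}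
    (hb : H.IsDescent (F.objD x) (F.mapG g) b) : ∃ a, G.IsDescent x g a ∧ F.mapA a = b := by
  obtain ⟨hb₁, hb₂⟩ := isDescent_iff.mp hb
  rw [cocycleFailure_mapG] at hb₁
  obtain ⟨a, ha, rfl⟩ := (hF 2).exists_D_eq_and_cast2_map2_eq (F.app_X x 2 0) _ b hb₁
  change H.twoCocycleLhs (F.mapA a) = H.twoCocycleRhs (F.mapG g) (F.mapA a) at hb₂
  rw [twoCocycleLhs_mapA, twoCocycleRhs_mapG] at hb₂
  exact ⟨a, isDescent_iff.mpr ⟨ha.symm, (hF 3).eq_of_D_eq_of_map2_eq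
    (D_twoCocycleLhs_eq ha.symm) ((cast2_inj _).mp hb₂)⟩, rfl⟩

end CosimplicialMor

/-- surjectivity half of the main theorem: every descent datum in H
is gauge equivalent to the image of a descent datum in G. -/
theorem main_surjective {G H : CosimplicialCrossedGroupoid} (F : CosimplicialMor G H)
    (hF : F.IsWeakEquiv) :
    ∀ Q : H.Desc, ∃ (P : G.Desc) (f : (H.obj 0).Hom Q.x (F.objD P.x))
      (c : (H.obj 1).G2 (H.X Q.x 1 0)),
      H.IsGauge Q.x Q.g Q.a (F.objD P.x) (F.mapG P.g) (F.mapA P.a) f c := by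
  intro Q
  obtain ⟨x, f, g, c, hg⟩ := F.exists_mapG_eq_transportG hF Q.g
  have hb := CosimplicialCrossedGroupoid.isDescent_transport f c Q.isDescent
  rw [← hg] at hb
  obtain ⟨a, ha, hFa⟩ := F.exists_isDescent_mapA_eq hF hb
  exact ⟨⟨x, g, a, ha⟩, f, c, CosimplicialCrossedGroupoid.isGauge_iff.mpr ⟨hg, hFa⟩⟩
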